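/- arXiv:1403.4151 — 3 statements merged into one kernel-verified Lean document; each statement's English description precedes it below -/
import Mathlib

section
/- Let L : [0,1] → FS₊(H) be a continuously differentiable path of selfadjoint Fredholm operators with regular crossing at λ₀ ∈ (0,1), meaning the quadratic form Γ(L,λ₀)[u] = ⟨L'(λ₀)u, u⟩ restricted to ker L(λ₀) is non-degenerate. Then there exist ε, C > 0 such that ‖L(λ)u‖ ≥ C·|λ−λ₀|·‖u‖ for all u ∈ H and all λ with |λ−λ₀| < ε. In particular L(λ) is injective with closed range for 0 < |λ−λ₀| < ε. -/
/-!
Split `u = x + w` along `K = ker L(λ₀)` and `Kᗮ`, and write `L(λ) = L(λ₀) + t L' + o(t)` with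
`t = λ - λ₀`. Since `L(λ₀)` is selfadjoint with closed range, it maps `H` into `Kᗮ` and is bounded
below there, so the `Kᗮ`-component of `L(λ)u` is at least `c₀‖w‖ - O(|t|)‖u‖`. Regularity of the
crossing says that the compression `P_K L'` is injective on the finite-dimensional `K`, hence
bounded below, so the `K`-component is at least `|t|(c₁‖x‖ - ‖L'‖‖w‖) - o(|t|)‖u‖`. For `|t|` small
one of the two bounds is `≳ |t|‖u‖`, according to whether `‖w‖` is small compared to `‖u‖`.
-/

open Module Set Filter Topology
open scoped RealInnerProductSpace

/-- `a` and `b` stand for the norms of the components in `K` and `Kᗮ` of a vector of norm `n`,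
`s` for `|λ - λ₀|`, and `h₁`, `h₂` for the lower bounds on `‖L(λ)u‖` coming from each component. -/
lemma half_mul_le_of_component_bounds {a b n s N c₀ c₁ M : ℝ} (hc₀ : 0 < c₀) (hc₁ : 0 < c₁)
    (hM : 0 ≤ M) (hn : 0 ≤ n) (hs₀ : 0 ≤ s) (hs : s ≤ c₀ * c₁ / (8 * (M + c₁) ^ 2))
    (hab : n ≤ a + b) (h₁ : s * (c₁ * a - M * b) - c₁ / 4 * s * n ≤ N)
    (h₂ : c₀ * b - s * (M + c₁ / 4) * n ≤ N) :
    c₁ / 2 * s * n ≤ N := by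
  set δ := c₁ / (4 * (M + c₁)) with hδ
  have hδD : δ * (M + c₁) = c₁ / 4 := by rw [hδ]; field_simp
  have hsD : s * (M + c₁) ≤ c₀ * δ / 2 := by
    rw [le_div_iff₀ (by positivity)] at hs
    rw [hδ, le_div_iff₀ (by positivity)]
    nlinarith
  rcases le_total b (δ * n) with hsmall | hlarge
  · have : (M + c₁) * b ≤ c₁ / 4 * n := by nlinarith
    nlinarith [mul_le_mul_of_nonneg_left this hs₀,
      mul_le_mul_of_nonneg_left hab (mul_nonneg hs₀ hc₁.le)]
  · have : c₀ * (δ * n) ≤ c₀ * b := mul_le_mul_of_nonneg_left hlarge hc₀.le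
    nlinarith [mul_le_mul_of_nonneg_right hsD hn, mul_nonneg (mul_nonneg hs₀ hc₁.le) hn,
      mul_nonneg (mul_nonneg hs₀ hM) hn]

section

variable {H : Type*} [NormedAddCommGroup H] [InnerProductSpace ℝ H]

lemma LinearMap.IsSymmetric.apply_mem_orthogonal_ker {T : H →ₗ[ℝ] H} (hT : T.IsSymmetric)
    (u : H) : T u ∈ (LinearMap.ker T)ᗮ := by
  rw [← hT.orthogonal_range]
  exact Submodule.le_orthogonal_orthogonal _ (LinearMap.mem_range_self _ u)

lemma exists_mul_norm_le_norm_apply_of_isClosed_range [CompleteSpace H] {T : H →L[ℝ] H}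
    (hran : IsClosed (LinearMap.range (T : H →ₗ[ℝ] H) : Set H)) :
    ∃ c > 0, ∀ w ∈ (LinearMap.ker (T : H →ₗ[ℝ] H))ᗮ, c * ‖w‖ ≤ ‖T w‖ := by
  set K := LinearMap.ker (T : H →ₗ[ℝ] H)
  have : CompleteSpace K := T.isClosed_ker.completeSpace_coe
  have : CompleteSpace Kᗮ := K.isClosed_orthogonal.completeSpace_coe
  set f : Kᗮ →L[ℝ] H := T.comp Kᗮ.subtypeL
  have hinj : Function.Injective f := by
    refine (injective_iff_map_eq_zero f).mpr fun w hw => ?_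
    exact Subtype.ext ((Submodule.disjoint_def.mp K.orthogonal_disjoint) w hw w.2)
  have hrange : Set.range f = Set.range T := by
    refine (Set.range_comp_subset_range Kᗮ.subtypeL T).antisymm ?_
    rintro _ ⟨u, rfl⟩
    refine ⟨⟨Kᗮ.starProjection u, Kᗮ.starProjection_apply_mem u⟩, ?_⟩
    conv_rhs => rw [← K.starProjection_add_starProjection_orthogonal u]
    have hPu : T (K.starProjection u) = 0 := K.starProjection_apply_mem u
    simp [hPu]
  obtain ⟨c, hc, hf⟩ := antilipschitzWith_iff_exists_mul_le_norm.mp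
    (f.antilipschitz_of_injective_of_isClosed_range hinj (hrange ▸ hran))
  exact ⟨c, hc, fun w hw => hf ⟨w, hw⟩⟩

lemma exists_mul_norm_le_norm_starProjection_apply {K : Submodule ℝ H} [FiniteDimensional ℝ K]
    {A : H →L[ℝ] H} (hA : ∀ x ∈ K, (∀ v ∈ K, ⟪A x, v⟫ = 0) → x = 0) :
    ∃ c > 0, ∀ x ∈ K, c * ‖x‖ ≤ ‖K.starProjection (A x)‖ := by
  set f : K →L[ℝ] H := K.starProjection.comp (A.comp K.subtypeL)
  have hinj : Function.Injective f := by
    rw [← f.coe_coe, ← LinearMap.ker_eq_bot, eq_bot_iff]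
    intro x hx
    have hAx : A x ∈ Kᗮ := K.starProjection_apply_eq_zero_iff.mp hx
    simpa using hA x x.2 ((K.mem_orthogonal' _).mp hAx)
  obtain ⟨k, -, hk⟩ := (LinearMap.injective_iff_antilipschitz (f : K →ₗ[ℝ] H)).mp hinj
  obtain ⟨c, hc, hf⟩ := antilipschitzWith_iff_exists_mul_le_norm.mp ⟨k, hk⟩
  exact ⟨c, hc, fun x hx => hf ⟨x, hx⟩⟩

variable {K : Submodule ℝ H} [K.HasOrthogonalProjection] {T A : H →L[ℝ] H} {c₀ c₁ : ℝ}

lemma norm_apply_ge_orthogonal_part (hker : ∀ x ∈ K, T x = 0)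
    (hT : ∀ w ∈ Kᗮ, c₀ * ‖w‖ ≤ ‖T w‖) (S : H →L[ℝ] H) (u : H) :
    c₀ * ‖Kᗮ.starProjection u‖ - ‖S - T‖ * ‖u‖ ≤ ‖S u‖ := by
  have hTu : T u = T (Kᗮ.starProjection u) := by
    conv_lhs => rw [← K.starProjection_add_starProjection_orthogonal u]
    rw [map_add, hker _ (K.starProjection_apply_mem u), zero_add]
  calc c₀ * ‖Kᗮ.starProjection u‖ - ‖S - T‖ * ‖u‖
      ≤ ‖T u‖ - ‖(S - T) u‖ := by
        gcongr
        · exact hTu ▸ hT _ (Kᗮ.starProjection_apply_mem u)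
        · exact (S - T).le_opNorm u
    _ ≤ ‖T u + (S - T) u‖ := norm_sub_le_norm_add _ _
    _ = ‖S u‖ := by simp

lemma norm_apply_ge_kernel_part (hrange : ∀ u, T u ∈ Kᗮ)
    (hA : ∀ x ∈ K, c₁ * ‖x‖ ≤ ‖K.starProjection (A x)‖) (S : H →L[ℝ] H) (t : ℝ) (u : H) :
    |t| * (c₁ * ‖K.starProjection u‖ - ‖A‖ * ‖Kᗮ.starProjection u‖) - ‖S - T - t • A‖ * ‖u‖ ≤
      ‖S u‖ := by
  set P := K.starProjection
  set Q := Kᗮ.starProjection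
  set R := S - T - t • A
  have hPSu : P (S u) = t • P (A (P u)) + (t • P (A (Q u)) + P (R u)) := by
    have hSu : S u = T u + t • A (P u + Q u) + R u := by
      simp [R, P, Q]
    have hPT : P (T u) = 0 := K.starProjection_apply_eq_zero_iff.mpr (hrange u)
    rw [hSu, map_add, map_add, hPT, zero_add, map_add, smul_add, map_add, map_smul, map_smul,
      add_assoc]
  have hAP : c₁ * ‖P u‖ ≤ ‖P (A (P u))‖ := hA _ (K.starProjection_apply_mem u)
  have hAQ : ‖P (A (Q u))‖ ≤ ‖A‖ * ‖Q u‖ :=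
    (K.norm_starProjection_apply_le _).trans (A.le_opNorm _)
  have hRu : ‖P (R u)‖ ≤ ‖R‖ * ‖u‖ := (K.norm_starProjection_apply_le _).trans (R.le_opNorm _)
  calc |t| * (c₁ * ‖P u‖ - ‖A‖ * ‖Q u‖) - ‖R‖ * ‖u‖
      ≤ |t| * ‖P (A (P u))‖ - (|t| * ‖P (A (Q u))‖ + ‖P (R u)‖) := by
        have := mul_le_mul_of_nonneg_left hAP (abs_nonneg t)
        have := mul_le_mul_of_nonneg_left hAQ (abs_nonneg t)
        linarith
    _ ≤ ‖t • P (A (P u))‖ - ‖t • P (A (Q u)) + P (R u)‖ := by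
        rw [norm_smul, Real.norm_eq_abs]
        gcongr
        exact (norm_add_le _ _).trans (by rw [norm_smul, Real.norm_eq_abs])
    _ ≤ ‖P (S u)‖ := hPSu ▸ norm_sub_le_norm_add _ _
    _ ≤ ‖S u‖ := K.norm_starProjection_apply_le _

lemma norm_apply_ge_of_crossing (hker : ∀ x ∈ K, T x = 0)
    (hrange : ∀ u, T u ∈ Kᗮ) (hT : ∀ w ∈ Kᗮ, c₀ * ‖w‖ ≤ ‖T w‖)
    (hA : ∀ x ∈ K, c₁ * ‖x‖ ≤ ‖K.starProjection (A x)‖) (hc₀ : 0 < c₀) (hc₁ : 0 < c₁)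
    {S : H →L[ℝ] H} {t : ℝ} (hS : ‖S - T - t • A‖ ≤ c₁ / 4 * |t|)
    (ht : |t| ≤ c₀ * c₁ / (8 * (‖A‖ + c₁) ^ 2)) (u : H) :
    c₁ / 2 * |t| * ‖u‖ ≤ ‖S u‖ := by
  have h₁ := norm_apply_ge_kernel_part hrange hA S t u
  have h₂ := norm_apply_ge_orthogonal_part hker hT S u
  have hST : ‖S - T‖ ≤ |t| * (‖A‖ + c₁ / 4) :=
    calc ‖S - T‖ = ‖t • A + (S - T - t • A)‖ := by rw [add_sub_cancel]
      _ ≤ |t| * ‖A‖ + c₁ / 4 * |t| := by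
        grw [norm_add_le, norm_smul, Real.norm_eq_abs, hS]
      _ = |t| * (‖A‖ + c₁ / 4) := by ring
  have hsplit : ‖u‖ ≤ ‖K.starProjection u‖ + ‖Kᗮ.starProjection u‖ := by
    conv_lhs => rw [← K.starProjection_add_starProjection_orthogonal u]
    exact norm_add_le _ _
  exact half_mul_le_of_component_bounds hc₀ hc₁ (norm_nonneg A) (norm_nonneg u) (abs_nonneg t) ht
    hsplit (h₁.trans' (by gcongr)) (h₂.trans' (by gcongr))

lemma eventually_norm_apply_ge_of_hasDerivAt {L : ℝ → H →L[ℝ] H} {lam₀ : ℝ}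
    (hder : HasDerivAt L A lam₀)
    (hker : ∀ x ∈ K, L lam₀ x = 0) (hrange : ∀ u, L lam₀ u ∈ Kᗮ)
    (hT : ∀ w ∈ Kᗮ, c₀ * ‖w‖ ≤ ‖L lam₀ w‖) (hA : ∀ x ∈ K, c₁ * ‖x‖ ≤ ‖K.starProjection (A x)‖)
    (hc₀ : 0 < c₀) (hc₁ : 0 < c₁) :
    ∀ᶠ l in 𝓝 lam₀, ∀ u, c₁ / 2 * |l - lam₀| * ‖u‖ ≤ ‖L l u‖ := by
  filter_upwards [hder.isLittleO.bound (by positivity : 0 < c₁ / 4),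
    Metric.closedBall_mem_nhds lam₀ (by positivity : 0 < c₀ * c₁ / (8 * (‖A‖ + c₁) ^ 2))]
    with l hl hsmall
  rw [Metric.mem_closedBall, Real.dist_eq] at hsmall
  rw [Real.norm_eq_abs] at hl
  exact norm_apply_ge_of_crossing hker hrange hT hA hc₀ hc₁ hl hsmall

end

theorem regular_crossing_lower_bound_general
    {H : Type*} [NormedAddCommGroup H] [InnerProductSpace ℝ H] [CompleteSpace H]
    (L : ℝ → H →L[ℝ] H)
    (hsa : ∀ l ∈ Icc (0:ℝ) 1, IsSelfAdjoint (L l))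
    (hker : ∀ l ∈ Icc (0:ℝ) 1, FiniteDimensional ℝ (LinearMap.ker (L l : H →ₗ[ℝ] H)))
    (hran : ∀ l ∈ Icc (0:ℝ) 1, IsClosed (LinearMap.range (L l : H →ₗ[ℝ] H) : Set H))
    (lam₀ : ℝ) (hlam₀ : lam₀ ∈ Ioo (0:ℝ) 1)
    (L' : H →L[ℝ] H) (hder : HasDerivAt L L' lam₀)
    (hreg : ∀ u ∈ LinearMap.ker (L lam₀ : H →ₗ[ℝ] H),
      (∀ v ∈ LinearMap.ker (L lam₀ : H →ₗ[ℝ] H), ⟪L' u, v⟫ = 0) → u = 0) :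
    ∃ ε > (0:ℝ), ∃ C > (0:ℝ),
      (∀ l ∈ Icc (0:ℝ) 1, |l - lam₀| < ε → ∀ u : H, C * |l - lam₀| * ‖u‖ ≤ ‖L l u‖) ∧
      ∀ l ∈ Icc (0:ℝ) 1, 0 < |l - lam₀| → |l - lam₀| < ε →
        Function.Injective (L l) ∧ IsClosed (LinearMap.range (L l : H →ₗ[ℝ] H) : Set H) := by
  have hl₀ : lam₀ ∈ Icc (0:ℝ) 1 := Ioo_subset_Icc_self hlam₀
  have := hker lam₀ hl₀
  obtain ⟨c₀, hc₀, hT⟩ := exists_mul_norm_le_norm_apply_of_isClosed_range (hran lam₀ hl₀)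
  obtain ⟨c₁, hc₁, hA⟩ := exists_mul_norm_le_norm_starProjection_apply hreg
  obtain ⟨ε, hε, hbound⟩ := Metric.eventually_nhds_iff.mp <|
    eventually_norm_apply_ge_of_hasDerivAt hder (fun _ hx => hx)
      (hsa lam₀ hl₀).isSymmetric.apply_mem_orthogonal_ker hT hA hc₀ hc₁
  have hbound' : ∀ l, |l - lam₀| < ε → ∀ u, c₁ / 2 * |l - lam₀| * ‖u‖ ≤ ‖L l u‖ :=
    fun l hl => hbound (by rwa [Real.dist_eq])
  refine ⟨ε, hε, c₁ / 2, by positivity, fun l _ => hbound' l, fun l hl hpos hlt => ⟨?_, hran l hl⟩⟩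
  obtain ⟨k, hk⟩ := antilipschitzWith_iff_exists_mul_le_norm.mpr
    ⟨c₁ / 2 * |l - lam₀|, by positivity, hbound' l hlt⟩
  exact hk.injective

/-- Let `L : [0,1] → FS₊(H)` be a continuously differentiable path of selfadjoint
Fredholm operators with a regular crossing at `λ₀ ∈ (0,1)`, i.e. the crossing form
`u ↦ ⟪L'(λ₀)u, u⟫` restricted to `ker L(λ₀)` is non-degenerate. Then there exist `ε, C > 0` such
that `‖L(λ)u‖ ≥ C|λ−λ₀|‖u‖` for all `u ∈ H` and `|λ−λ₀| < ε`; in particular `L(λ)` is injective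
with closed range for `0 < |λ−λ₀| < ε`. -/
theorem regular_crossing_lower_bound
    {H : Type*} [NormedAddCommGroup H] [InnerProductSpace ℝ H] [CompleteSpace H]
    (L : ℝ → H →L[ℝ] H) (hC1 : ContDiffOn ℝ 1 L (Icc 0 1))
    (hsa : ∀ l ∈ Icc (0:ℝ) 1, IsSelfAdjoint (L l))
    (hker : ∀ l ∈ Icc (0:ℝ) 1, FiniteDimensional ℝ (LinearMap.ker (L l : H →ₗ[ℝ] H)))
    (hran : ∀ l ∈ Icc (0:ℝ) 1, IsClosed (LinearMap.range (L l : H →ₗ[ℝ] H) : Set H))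
    (lam₀ : ℝ) (hlam₀ : lam₀ ∈ Ioo (0:ℝ) 1)
    (L' : H →L[ℝ] H) (hder : HasDerivAt L L' lam₀)
    (hcross : LinearMap.ker (L lam₀ : H →ₗ[ℝ] H) ≠ ⊥)
    (hreg : ∀ u ∈ LinearMap.ker (L lam₀ : H →ₗ[ℝ] H),
      (∀ v ∈ LinearMap.ker (L lam₀ : H →ₗ[ℝ] H), ⟪L' u, v⟫ = 0) → u = 0) :
    ∃ ε > (0:ℝ), ∃ C > (0:ℝ),
      (∀ l ∈ Icc (0:ℝ) 1, |l - lam₀| < ε → ∀ u : H, C * |l - lam₀| * ‖u‖ ≤ ‖L l u‖) ∧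
      ∀ l ∈ Icc (0:ℝ) 1, 0 < |l - lam₀| → |l - lam₀| < ε →
        Function.Injective (L l) ∧ IsClosed (LinearMap.range (L l : H →ₗ[ℝ] H) : Set H) :=
  regular_crossing_lower_bound_general L hsa hker hran lam₀ hlam₀ L' hder hreg
end

section
/- Regular crossings of a continuously differentiable path of selfadjoint Fredholm operators are isolated: if λ₀ ∈ (0,1) is a regular crossing of L, then there exists ε > 0 such that ker L(λ) = {0} for all λ with 0 < |λ−λ₀| < ε. -/
/-!
Put `A = L λ₀` and `N = ker A`. If kernels were nontrivial at points `lₙ → λ₀`, `lₙ ≠ λ₀`,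
pick unit vectors `wₙ ∈ ker L(lₙ)`; then `A wₙ = (A - L(lₙ)) wₙ → 0`. Since `A` has closed range,
the open mapping theorem puts `wₙ` within `C ‖A wₙ‖` of `N`, and `N` is finite dimensional, so a
subsequence converges to a unit vector `u ∈ N`. The difference quotients
`(lₙ - λ₀)⁻¹ (L(lₙ) - A)` converge to `L'` and map `wₙ` to `-(lₙ - λ₀)⁻¹ A wₙ ∈ range A ⊆ Nᗮ`
(selfadjointness), so `L' u ∈ Nᗮ`. Regularity of the crossing then forces `u = 0`.
-/

open Filter Set Topology
open scoped RealInnerProductSpace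

namespace ContinuousLinearMap

variable {𝕜 E F : Type*} [NontriviallyNormedField 𝕜]
  [NormedAddCommGroup E] [NormedSpace 𝕜 E] [CompleteSpace E]
  [NormedAddCommGroup F] [NormedSpace 𝕜 F] [CompleteSpace F]

theorem exists_mem_ker_norm_sub_le_of_isClosed_range (A : E →L[𝕜] F)
    (hA : IsClosed (LinearMap.range (A : E →ₗ[𝕜] F) : Set F)) :
    ∃ C > 0, ∀ x, ∃ y ∈ LinearMap.ker (A : E →ₗ[𝕜] F), ‖x - y‖ ≤ C * ‖A x‖ := by
  have : CompleteSpace (LinearMap.range (A : E →ₗ[𝕜] F)) := hA.completeSpace_coe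
  let A' : E →L[𝕜] LinearMap.range (A : E →ₗ[𝕜] F) :=
    A.codRestrict _ (LinearMap.mem_range_self (A : E →ₗ[𝕜] F))
  have hA' : Function.Surjective A' := by
    rintro ⟨_, x, rfl⟩
    exact ⟨x, rfl⟩
  obtain ⟨C, hC, hpre⟩ := A'.exists_preimage_norm_le hA'
  refine ⟨C, hC, fun x => ?_⟩
  obtain ⟨z, hz, hzC⟩ := hpre (A' x)
  have hA'x : ‖A' x‖ = ‖A x‖ := rfl
  refine ⟨x - z, ?_, by simpa [hA'x] using hzC⟩
  have hAz : A z = A x := congrArg Subtype.val hz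
  simp [hAz]

theorem exists_subseq_tendsto_mem_ker_of_isClosed_range [LocallyCompactSpace 𝕜]
    (A : E →L[𝕜] F) (hA : IsClosed (LinearMap.range (A : E →ₗ[𝕜] F) : Set F))
    [FiniteDimensional 𝕜 (LinearMap.ker (A : E →ₗ[𝕜] F))] {w : ℕ → E}
    (hw : Bornology.IsBounded (range w)) (hAw : Tendsto (fun n => A (w n)) atTop (𝓝 0)) :
    ∃ u ∈ LinearMap.ker (A : E →ₗ[𝕜] F), ∃ φ : ℕ → ℕ, StrictMono φ ∧
      Tendsto (w ∘ φ) atTop (𝓝 u) := by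
  have := FiniteDimensional.proper 𝕜 (LinearMap.ker (A : E →ₗ[𝕜] F))
  obtain ⟨C, -, hC⟩ := A.exists_mem_ker_norm_sub_le_of_isClosed_range hA
  choose y hy_ker hy using fun n => hC (w n)
  have hwy : Tendsto (fun n => w n - y n) atTop (𝓝 0) :=
    squeeze_zero_norm hy (by simpa using (tendsto_norm_zero.comp hAw).const_mul C)
  obtain ⟨R₁, hR₁⟩ := isBounded_iff_forall_norm_le.mp hw
  obtain ⟨R₂, hR₂⟩ :=
    isBounded_iff_forall_norm_le.mp (Metric.isBounded_range_of_tendsto _ hwy)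
  let y' : ℕ → LinearMap.ker (A : E →ₗ[𝕜] F) := fun n => ⟨y n, hy_ker n⟩
  have hy'_bdd : Bornology.IsBounded (range y') := by
    refine isBounded_iff_forall_norm_le.mpr ⟨R₁ + R₂, ?_⟩
    rintro _ ⟨n, rfl⟩
    calc ‖y n‖ = ‖w n - (w n - y n)‖ := by rw [sub_sub_cancel]
      _ ≤ ‖w n‖ + ‖w n - y n‖ := norm_sub_le _ _
      _ ≤ R₁ + R₂ := add_le_add (hR₁ _ ⟨n, rfl⟩) (hR₂ _ ⟨n, rfl⟩)
  obtain ⟨u, -, φ, hφ, hu⟩ := tendsto_subseq_of_bounded hy'_bdd (fun n => mem_range_self n)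
  refine ⟨u, u.2, φ, hφ, ?_⟩
  have := ((continuous_subtype_val.tendsto u).comp hu).add (hwy.comp hφ.tendsto_atTop)
  simpa [Function.comp_def, y'] using this

end ContinuousLinearMap

theorem Submodule.exists_mem_norm_eq_one_of_ne_bot {𝕜 E : Type*} [RCLike 𝕜]
    [NormedAddCommGroup E] [NormedSpace 𝕜 E] {K : Submodule 𝕜 E} (hK : K ≠ ⊥) :
    ∃ w ∈ K, ‖w‖ = 1 := by
  obtain ⟨v, hv, hv0⟩ := (Submodule.ne_bot_iff K).mp hK
  exact ⟨(‖v‖⁻¹ : 𝕜) • v, K.smul_mem _ hv, norm_smul_inv_norm hv0⟩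

section

variable {H : Type*} [NormedAddCommGroup H] [InnerProductSpace ℝ H] [CompleteSpace H]

theorem eventually_ker_eq_bot_of_regular_crossing {L : ℝ → H →L[ℝ] H} {L' : H →L[ℝ] H}
    {lam₀ : ℝ} (hder : HasDerivAt L L' lam₀) (hsa : IsSelfAdjoint (L lam₀))
    [FiniteDimensional ℝ (LinearMap.ker (L lam₀ : H →ₗ[ℝ] H))]
    (hran : IsClosed (LinearMap.range (L lam₀ : H →ₗ[ℝ] H) : Set H))
    (hreg : ∀ u ∈ LinearMap.ker (L lam₀ : H →ₗ[ℝ] H),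
      (∀ v ∈ LinearMap.ker (L lam₀ : H →ₗ[ℝ] H), ⟪L' u, v⟫ = 0) → u = 0) :
    ∀ᶠ l in 𝓝[≠] lam₀, LinearMap.ker (L l : H →ₗ[ℝ] H) = ⊥ := by
  set A := L lam₀
  set N := LinearMap.ker (A : H →ₗ[ℝ] H)
  by_contra h
  obtain ⟨l, hl, hl_ker⟩ := exists_seq_forall_of_frequently (not_eventually.mp h)
  choose w hw_ker hw_norm using fun n => Submodule.exists_mem_norm_eq_one_of_ne_bot (hl_ker n)
  have hLw : ∀ n, L (l n) (w n) = 0 := hw_ker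
  have hAw : Tendsto (fun n => A (w n)) atTop (𝓝 0) := by
    have hLl : Tendsto (fun n => L (l n) - A) atTop (𝓝 0) :=
      tendsto_sub_nhds_zero_iff.mpr
        (hder.continuousAt.tendsto.comp (hl.mono_right nhdsWithin_le_nhds))
    refine squeeze_zero_norm (fun n => ?_) (tendsto_norm_zero.comp hLl)
    calc ‖A (w n)‖ = ‖(L (l n) - A) (w n)‖ := by simp [hLw]
      _ ≤ ‖L (l n) - A‖ * ‖w n‖ := ContinuousLinearMap.le_opNorm _ _
      _ = ‖L (l n) - A‖ := by rw [hw_norm, mul_one]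
  have hw_bdd : Bornology.IsBounded (range w) :=
    isBounded_iff_forall_norm_le.mpr ⟨1, by rintro _ ⟨n, rfl⟩; exact (hw_norm n).le⟩
  obtain ⟨u, hu_ker, φ, hφ, hwu⟩ :=
    A.exists_subseq_tendsto_mem_ker_of_isClosed_range hran hw_bdd hAw
  have hu_norm : ‖u‖ = 1 := tendsto_nhds_unique hwu.norm (by simp [hw_norm])
  have hrange : LinearMap.range (A : H →ₗ[ℝ] H) ≤ Nᗮ := by
    have := Submodule.le_orthogonal_orthogonal (LinearMap.range (A : H →ₗ[ℝ] H))
    rwa [hsa.isSymmetric.orthogonal_range] at this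
  have hslope_mem : ∀ n, slope L lam₀ (l n) (w n) ∈ Nᗮ := by
    intro n
    refine hrange ⟨-(l n - lam₀)⁻¹ • w n, ?_⟩
    simp [slope_def_module, hLw, A]
  have hslope : Tendsto (fun n => slope L lam₀ (l (φ n)) (w (φ n))) atTop (𝓝 (L' u)) :=
    (isBoundedBilinearMap_apply.continuous.tendsto (L', u)).comp
      (((hasDerivAt_iff_tendsto_slope.mp hder).comp (hl.comp hφ.tendsto_atTop)).prodMk_nhds hwu)
  have hL'u : L' u ∈ Nᗮ :=
    N.isClosed_orthogonal.mem_of_tendsto hslope (Eventually.of_forall fun n => hslope_mem (φ n))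
  have hu : u = 0 := hreg u hu_ker fun v hv => (N.mem_orthogonal' _).mp hL'u v hv
  simp [hu] at hu_norm

end

theorem regular_crossing_isolated_general
    {H : Type*} [NormedAddCommGroup H] [InnerProductSpace ℝ H] [CompleteSpace H]
    (L : ℝ → H →L[ℝ] H)
    (hsa : ∀ l ∈ Icc (0:ℝ) 1, IsSelfAdjoint (L l))
    (hker : ∀ l ∈ Icc (0:ℝ) 1, FiniteDimensional ℝ (LinearMap.ker (L l : H →ₗ[ℝ] H)))
    (hran : ∀ l ∈ Icc (0:ℝ) 1, IsClosed (LinearMap.range (L l : H →ₗ[ℝ] H) : Set H))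
    (lam₀ : ℝ) (hlam₀ : lam₀ ∈ Ioo (0:ℝ) 1)
    (L' : H →L[ℝ] H) (hder : HasDerivAt L L' lam₀)
    (hreg : ∀ u ∈ LinearMap.ker (L lam₀ : H →ₗ[ℝ] H),
      (∀ v ∈ LinearMap.ker (L lam₀ : H →ₗ[ℝ] H), ⟪L' u, v⟫ = 0) → u = 0) :
    ∃ ε > (0:ℝ), ∀ l ∈ Icc (0:ℝ) 1, 0 < |l - lam₀| → |l - lam₀| < ε →
      LinearMap.ker (L l : H →ₗ[ℝ] H) = ⊥ := by
  have hmem : lam₀ ∈ Icc (0:ℝ) 1 := Ioo_subset_Icc_self hlam₀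
  have := hker lam₀ hmem
  obtain ⟨ε, hε, h⟩ := Metric.eventually_nhds_iff.mp <| eventually_nhdsWithin_iff.mp <|
    eventually_ker_eq_bot_of_regular_crossing hder (hsa lam₀ hmem) (hran lam₀ hmem) hreg
  refine ⟨ε, hε, fun l _ hpos hlt => h (by rwa [Real.dist_eq]) ?_⟩
  simpa [sub_eq_zero] using hpos

/-- Regular crossings of a continuously differentiable path of selfadjoint
Fredholm operators are isolated: if `λ₀ ∈ (0,1)` is a regular crossing of `L`, then there exists
`ε > 0` such that `ker L(λ) = {0}` for all `λ` with `0 < |λ−λ₀| < ε`. -/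
theorem regular_crossing_isolated
    {H : Type*} [NormedAddCommGroup H] [InnerProductSpace ℝ H] [CompleteSpace H]
    (L : ℝ → H →L[ℝ] H) (hC1 : ContDiffOn ℝ 1 L (Icc 0 1))
    (hsa : ∀ l ∈ Icc (0:ℝ) 1, IsSelfAdjoint (L l))
    (hker : ∀ l ∈ Icc (0:ℝ) 1, FiniteDimensional ℝ (LinearMap.ker (L l : H →ₗ[ℝ] H)))
    (hran : ∀ l ∈ Icc (0:ℝ) 1, IsClosed (LinearMap.range (L l : H →ₗ[ℝ] H) : Set H))
    (lam₀ : ℝ) (hlam₀ : lam₀ ∈ Ioo (0:ℝ) 1)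
    (L' : H →L[ℝ] H) (hder : HasDerivAt L L' lam₀)
    (hcross : LinearMap.ker (L lam₀ : H →ₗ[ℝ] H) ≠ ⊥)
    (hreg : ∀ u ∈ LinearMap.ker (L lam₀ : H →ₗ[ℝ] H),
      (∀ v ∈ LinearMap.ker (L lam₀ : H →ₗ[ℝ] H), ⟪L' u, v⟫ = 0) → u = 0) :
    ∃ ε > (0:ℝ), ∀ l ∈ Icc (0:ℝ) 1, 0 < |l - lam₀| → |l - lam₀| < ε →
      LinearMap.ker (L l : H →ₗ[ℝ] H) = ⊥ :=
  regular_crossing_isolated_general L hsa hker hran lam₀ hlam₀ L' hder hreg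
end

section
/- For symmetric operators on a finite-dimensional real inner product space: if A is invertible and T(t) = t·B + (1−t)·s·A is invertible for all t ∈ [0,1], where s ≠ 0 is a real scalar and B is symmetric, then μ₋(B) = μ₋(s·A); in particular μ₋(s·A) = μ₋(A) if s > 0 and μ₋(s·A) = μ₋(−A) if s < 0. -/
open Module Set
open scoped RealInnerProductSpace

/-- The Morse index: the number of negative eigenvalues, counted with multiplicity. -/
noncomputable def morseIndex {H : Type*} [NormedAddCommGroup H] [InnerProductSpace ℝ H]
    (T : H →L[ℝ] H) : ℕ :=
  Module.finrank ℝ ↥(⨆ μ : {μ : ℝ // μ < 0}, Module.End.eigenspace (↑T : H →ₗ[ℝ] H) ↑μ)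

/-! Write `N(T)` for the span of the eigenvectors of `T` with negative eigenvalue, so that
`μ₋(T) = dim N(T)`, and `P(T)` for the span of the remaining ones, so that `H = N(T) ⊕ P(T)`.
The quadratic form `x ↦ ⟪T x, x⟫` is negative definite on `N(T)` and nonnegative on `P(T)`;
hence every subspace on which it is negative definite meets `P(T)` trivially and has dimension at
most `μ₋(T)`. Negative definiteness on the finite-dimensional `N(T)` survives small perturbations
of `T`, so `μ₋` is lower semicontinuous on symmetric operators. For invertible `T` we have
`P(T) = N(-T)`, i.e. `μ₋(T) + μ₋(-T) = dim H`, and lower semicontinuity of both summands makes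
`μ₋` locally constant on invertible symmetric operators, hence constant along the segment from
`s • A` to `B`. The remaining claims are the invariance of `μ₋` under positive rescaling,
applied to `s • A = (-s) • (-A)` when `s < 0`. -/

namespace Module.End

variable {K M : Type*} [Field K] [AddCommGroup M] [Module K M]

def spectralSubspace (f : End K M) (p : K → Prop) : Submodule K M :=
  ⨆ μ : {μ : K // p μ}, f.eigenspace μ

lemma spectralSubspace_mono {f : End K M} {p q : K → Prop}
    (h : ∀ μ, f.HasEigenvalue μ → p μ → q μ) : f.spectralSubspace p ≤ f.spectralSubspace q := by
  refine iSup_le fun μ => ?_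
  by_cases hμ : f.HasEigenvalue μ
  · exact le_iSup_of_le ⟨μ, h μ hμ μ.2⟩ le_rfl
  · rw [not_not.mp (hasEigenvalue_iff.not.mp hμ)]
    exact bot_le

lemma spectralSubspace_congr {f : End K M} {p q : K → Prop}
    (h : ∀ μ, f.HasEigenvalue μ → (p μ ↔ q μ)) : f.spectralSubspace p = f.spectralSubspace q :=
  le_antisymm (spectralSubspace_mono fun μ hμ => (h μ hμ).1)
    (spectralSubspace_mono fun μ hμ => (h μ hμ).2)

lemma eigenspace_smul (f : End K M) {c : K} (hc : c ≠ 0) (μ : K) :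
    (c • f).eigenspace (c * μ) = f.eigenspace μ := by
  ext x
  simp only [mem_eigenspace_iff, LinearMap.smul_apply, mul_smul, smul_right_inj hc]

lemma spectralSubspace_smul (f : End K M) {c : K} (hc : c ≠ 0) (p : K → Prop) :
    (c • f).spectralSubspace p = f.spectralSubspace fun μ => p (c * μ) := by
  refine le_antisymm (iSup_le fun μ => ?_) (iSup_le fun μ => ?_)
  · rw [← mul_inv_cancel_left₀ hc μ.1, eigenspace_smul f hc]
    exact le_iSup_of_le ⟨c⁻¹ * μ, by simpa [mul_inv_cancel_left₀ hc] using μ.2⟩ le_rfl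
  · rw [← eigenspace_smul f hc]
    exact le_iSup_of_le ⟨c * μ, μ.2⟩ le_rfl

end Module.End

namespace LinearMap.IsSymmetric

open Module.End

variable {H : Type*} [NormedAddCommGroup H] [InnerProductSpace ℝ H] [FiniteDimensional ℝ H]
  {T : H →ₗ[ℝ] H}

lemma spectralSubspace_sup_compl (hT : T.IsSymmetric) (p : ℝ → Prop) :
    spectralSubspace T p ⊔ spectralSubspace T (fun μ => ¬p μ) = ⊤ := by
  rw [eq_top_iff,
    ← Submodule.orthogonal_eq_bot_iff.mp hT.orthogonalComplement_iSup_eigenspaces_eq_bot]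
  refine iSup_le fun μ => ?_
  by_cases hμ : p μ
  · exact le_sup_of_le_left (le_iSup_of_le ⟨μ, hμ⟩ le_rfl)
  · exact le_sup_of_le_right (le_iSup_of_le ⟨μ, hμ⟩ le_rfl)

lemma eigenvalues_of_mem_spectralSubspace (hT : T.IsSymmetric) {p : ℝ → Prop} {x : H}
    (hx : x ∈ spectralSubspace T p) {i : Fin (finrank ℝ H)}
    (hi : (hT.eigenvectorBasis rfl).repr x i ≠ 0) : p (hT.eigenvalues rfl i) := by
  set e := hT.eigenvectorBasis rfl
  have hspan : spectralSubspace T p ≤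
      Submodule.span ℝ (e.toBasis '' {i | p (hT.eigenvalues rfl i)}) := by
    refine iSup_le fun μ y (hy : y ∈ eigenspace T μ) => ?_
    rw [e.toBasis.mem_span_image]
    intro i hi
    rw [Finset.mem_coe, Finsupp.mem_support_iff, OrthonormalBasis.coe_toBasis_repr_apply] at hi
    have hrepr := hT.eigenvectorBasis_apply_self_apply rfl y i
    rw [mem_eigenspace_iff.mp hy, map_smul] at hrepr
    have hμ : μ.1 = hT.eigenvalues rfl i := mul_right_cancel₀ hi (by simpa using hrepr)
    exact show p _ from hμ ▸ μ.2
  exact e.toBasis.mem_span_image.mp (hspan hx) (by simpa using hi)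

lemma inner_apply_self_eq_sum (hT : T.IsSymmetric) (x : H) :
    ⟪T x, x⟫ = ∑ i, hT.eigenvalues rfl i * (hT.eigenvectorBasis rfl).repr x i ^ 2 := by
  set e := hT.eigenvectorBasis rfl
  rw [← e.sum_inner_mul_inner]
  refine Finset.sum_congr rfl fun i _ => ?_
  rw [real_inner_comm, ← e.repr_apply_apply, ← e.repr_apply_apply,
    hT.eigenvectorBasis_apply_self_apply]
  simp only [RCLike.ofReal_real_eq_id, id_eq]
  ring

lemma inner_apply_self_neg_of_mem (hT : T.IsSymmetric) {x : H}
    (hx : x ∈ spectralSubspace T (· < 0)) (hx0 : x ≠ 0) : ⟪T x, x⟫ < 0 := by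
  rw [hT.inner_apply_self_eq_sum, ← neg_pos, ← Finset.sum_neg_distrib]
  set e := hT.eigenvectorBasis rfl
  obtain ⟨j, hj⟩ : ∃ j, e.repr x j ≠ 0 := by
    by_contra! h
    exact hx0 (e.repr.map_eq_zero_iff.mp (PiLp.ext h))
  refine Finset.sum_pos' (fun i _ => ?_) ⟨j, Finset.mem_univ j, ?_⟩
  · by_cases hi : e.repr x i = 0
    · simp [hi]
    · exact neg_nonneg.mpr (mul_nonpos_of_nonpos_of_nonneg
        (hT.eigenvalues_of_mem_spectralSubspace hx hi).le (sq_nonneg _))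
  · exact neg_pos.mpr (mul_neg_of_neg_of_pos (hT.eigenvalues_of_mem_spectralSubspace hx hj)
      (by positivity))

lemma inner_apply_self_nonneg_of_mem (hT : T.IsSymmetric) {x : H}
    (hx : x ∈ spectralSubspace T fun μ => ¬μ < 0) : 0 ≤ ⟪T x, x⟫ := by
  rw [hT.inner_apply_self_eq_sum]
  refine Finset.sum_nonneg fun i _ => ?_
  by_cases hi : (hT.eigenvectorBasis rfl).repr x i = 0
  · simp [hi]
  · exact mul_nonneg (not_lt.mp (hT.eigenvalues_of_mem_spectralSubspace hx hi)) (sq_nonneg _)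

lemma disjoint_spectralSubspace_nonneg (hT : T.IsSymmetric) {V : Submodule ℝ H}
    (hV : ∀ x ∈ V, x ≠ 0 → ⟪T x, x⟫ < 0) : Disjoint V (spectralSubspace T fun μ => ¬μ < 0) :=
  Submodule.disjoint_def.mpr fun x hxV hnonneg => by
    by_contra hx
    exact (hV x hxV hx).not_ge (hT.inner_apply_self_nonneg_of_mem hnonneg)

lemma isCompl_spectralSubspace_neg (hT : T.IsSymmetric) :
    IsCompl (spectralSubspace T (· < 0)) (spectralSubspace T fun μ => ¬μ < 0) :=
  ⟨hT.disjoint_spectralSubspace_nonneg fun _ => hT.inner_apply_self_neg_of_mem,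
    codisjoint_iff.mpr (hT.spectralSubspace_sup_compl _)⟩

lemma finrank_le_finrank_spectralSubspace_neg (hT : T.IsSymmetric) {V : Submodule ℝ H}
    (hV : ∀ x ∈ V, x ≠ 0 → ⟪T x, x⟫ < 0) :
    finrank ℝ V ≤ finrank ℝ (spectralSubspace T (· < 0)) := by
  have := Submodule.finrank_add_finrank_le_of_disjoint (hT.disjoint_spectralSubspace_nonneg hV)
  rw [← Submodule.finrank_add_eq_of_isCompl hT.isCompl_spectralSubspace_neg] at this
  omega

end LinearMap.IsSymmetric

namespace ContinuousLinearMap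

open Topology

variable {H : Type*} [NormedAddCommGroup H] [InnerProductSpace ℝ H]

lemma exists_inner_le_neg_mul_norm_sq (T : H →L[ℝ] H) (N : Submodule ℝ H)
    [FiniteDimensional ℝ N] (hN : ∀ x ∈ N, x ≠ 0 → ⟪T x, x⟫ < 0) :
    ∃ c > 0, ∀ x ∈ N, ⟪T x, x⟫ ≤ -(c * ‖x‖ ^ 2) := by
  obtain ⟨c, hc, hsphere⟩ := (isCompact_sphere (0 : N) 1).exists_forall_le'
    (f := fun u : N => -⟪T u, u⟫) (by fun_prop) (a := 0) fun u hu =>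
      neg_pos.mpr (hN u u.2 (by simpa using Metric.ne_of_mem_sphere hu one_ne_zero))
  refine ⟨c, hc, fun x hx => ?_⟩
  rcases eq_or_ne x 0 with rfl | hx0
  · simp
  have hu := hsphere ⟨‖x‖⁻¹ • x, N.smul_mem _ hx⟩ (by simp [norm_smul, hx0])
  simp only [map_smul, real_inner_smul_left, real_inner_smul_right] at hu
  have hx : 0 < ‖x‖ := norm_pos_iff.mpr hx0
  field_simp at hu
  nlinarith

lemma eventually_inner_neg (T : H →L[ℝ] H) (N : Submodule ℝ H) [FiniteDimensional ℝ N]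
    (hN : ∀ x ∈ N, x ≠ 0 → ⟪T x, x⟫ < 0) :
    ∀ᶠ T' in 𝓝 T, ∀ x ∈ N, x ≠ 0 → ⟪T' x, x⟫ < 0 := by
  obtain ⟨c, hc, hTc⟩ := exists_inner_le_neg_mul_norm_sq T N hN
  filter_upwards [Metric.ball_mem_nhds T hc] with T' hT' x hx hx0
  rw [Metric.mem_ball, dist_eq_norm] at hT'
  have hdiff : ⟪(T' - T) x, x⟫ ≤ ‖T' - T‖ * ‖x‖ ^ 2 :=
    calc ⟪(T' - T) x, x⟫ ≤ ‖(T' - T) x‖ * ‖x‖ := real_inner_le_norm _ _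
      _ ≤ ‖T' - T‖ * ‖x‖ * ‖x‖ := by gcongr; exact le_opNorm _ _
      _ = ‖T' - T‖ * ‖x‖ ^ 2 := by ring
  have hsplit : ⟪T' x, x⟫ = ⟪T x, x⟫ + ⟪(T' - T) x, x⟫ := by
    rw [sub_apply, inner_sub_left]; ring
  have hx2 : 0 < ‖x‖ ^ 2 := by positivity
  nlinarith [hTc x hx]

end ContinuousLinearMap

section MorseIndex

open Topology Module.End

variable {H : Type*} [NormedAddCommGroup H] [InnerProductSpace ℝ H]

lemma morseIndex_eq_finrank_spectralSubspace (T : H →L[ℝ] H) :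
    morseIndex T = finrank ℝ (spectralSubspace (T : H →ₗ[ℝ] H) (· < 0)) :=
  rfl

lemma morseIndex_smul_of_pos (T : H →L[ℝ] H) {c : ℝ} (hc : 0 < c) :
    morseIndex (c • T) = morseIndex T := by
  have hpred : (fun μ : ℝ => c * μ < 0) = (· < 0) := by
    ext μ
    simp [mul_neg_iff, hc, hc.not_gt]
  rw [morseIndex_eq_finrank_spectralSubspace, morseIndex_eq_finrank_spectralSubspace,
    ContinuousLinearMap.toLinearMap_smul, spectralSubspace_smul _ hc.ne', hpred]

variable [FiniteDimensional ℝ H]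

lemma morseIndex_add_morseIndex_neg {T : H →L[ℝ] H} (hT : IsSelfAdjoint T)
    (hinj : Function.Injective T) : morseIndex T + morseIndex (-T) = finrank ℝ H := by
  have hneg : spectralSubspace ((-T : H →L[ℝ] H) : H →ₗ[ℝ] H) (· < 0)
      = spectralSubspace (T : H →ₗ[ℝ] H) fun μ => ¬μ < 0 := by
    rw [ContinuousLinearMap.toLinearMap_neg, ← neg_one_smul ℝ,
      spectralSubspace_smul _ (by norm_num)]
    refine spectralSubspace_congr fun μ hμ => ?_
    have hμ0 : μ ≠ 0 := by
      rintro rfl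
      exact hasEigenvalue_iff.mp hμ (by rw [eigenspace_zero, LinearMap.ker_eq_bot]; exact hinj)
    simpa using hμ0.symm.le_iff_lt.symm
  rw [morseIndex_eq_finrank_spectralSubspace, morseIndex_eq_finrank_spectralSubspace, hneg]
  exact Submodule.finrank_add_eq_of_isCompl hT.isSymmetric.isCompl_spectralSubspace_neg

lemma eventually_morseIndex_le {T : H →L[ℝ] H} (hT : IsSelfAdjoint T) :
    ∀ᶠ T' in 𝓝 T, IsSelfAdjoint T' → morseIndex T ≤ morseIndex T' := by
  filter_upwards [T.eventually_inner_neg _ fun _ => hT.isSymmetric.inner_apply_self_neg_of_mem]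
    with T' hT' hsa
  exact hsa.isSymmetric.finrank_le_finrank_spectralSubspace_neg hT'

lemma eventually_morseIndex_eq {T : H →L[ℝ] H} (hT : IsSelfAdjoint T)
    (hinj : Function.Injective T) :
    ∀ᶠ T' : H →L[ℝ] H in 𝓝 T, IsSelfAdjoint T' → Function.Injective T' →
      morseIndex T' = morseIndex T := by
  filter_upwards [eventually_morseIndex_le hT,
    (continuous_neg.tendsto T).eventually (eventually_morseIndex_le hT.neg)]
    with T' hle hle_neg hsa hinj'
  have hsum := morseIndex_add_morseIndex_neg hT hinj
  have hsum' := morseIndex_add_morseIndex_neg hsa hinj'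
  have hle' := hle hsa
  have hle_neg' := hle_neg hsa.neg
  omega

lemma morseIndex_eq_of_continuous {X : Type*} [TopologicalSpace X] [PreconnectedSpace X]
    {f : X → H →L[ℝ] H} (hf : Continuous f) (hsa : ∀ x, IsSelfAdjoint (f x))
    (hinj : ∀ x, Function.Injective (f x)) (x y : X) : morseIndex (f x) = morseIndex (f y) := by
  have hloc : IsLocallyConstant (morseIndex ∘ f) := by
    refine (IsLocallyConstant.iff_eventually_eq _).mpr fun x => ?_
    filter_upwards [(hf.tendsto x).eventually (eventually_morseIndex_eq (hsa x) (hinj x))]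
      with y hy
    exact hy (hsa y) (hinj y)
  exact hloc.apply_eq_of_preconnectedSpace x y

end MorseIndex

theorem morse_index_of_linear_homotopy_general
    {H : Type*} [NormedAddCommGroup H] [InnerProductSpace ℝ H] [FiniteDimensional ℝ H]
    (A B : H →L[ℝ] H) (hA : IsSelfAdjoint A) (hB : IsSelfAdjoint B)
    (s : ℝ)
    (hT : ∀ t ∈ Icc (0:ℝ) 1, Function.Bijective ⇑(t • B + (1 - t) • (s • A))) :
    morseIndex B = morseIndex (s • A) ∧
      (0 < s → morseIndex (s • A) = morseIndex A) ∧
      (s < 0 → morseIndex (s • A) = morseIndex (-A)) := by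
  refine ⟨?_, fun hs => morseIndex_smul_of_pos A hs, fun hs => ?_⟩
  · let T : Icc (0:ℝ) 1 → H →L[ℝ] H := fun t => (t : ℝ) • B + (1 - (t : ℝ)) • (s • A)
    have hsa : ∀ t, IsSelfAdjoint (T t) := fun t =>
      ((IsSelfAdjoint.all _).smul hB).add
        ((IsSelfAdjoint.all _).smul ((IsSelfAdjoint.all s).smul hA))
    simpa [T] using morseIndex_eq_of_continuous (f := T) (by fun_prop) hsa
      (fun t => (hT t t.2).injective) ⟨1, by simp⟩ ⟨0, by simp⟩
  · rw [← neg_smul_neg]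
    exact morseIndex_smul_of_pos (-A) (neg_pos.mpr hs)

/-- For symmetric operators on a finite-dimensional real inner product space:
if `A` is invertible and `T(t) = t·B + (1−t)·s·A` is invertible for all `t ∈ [0,1]`, where
`s ≠ 0` and `B` is symmetric, then `μ₋(B) = μ₋(s·A)`; in particular `μ₋(s·A) = μ₋(A)` if `s > 0`
and `μ₋(s·A) = μ₋(−A)` if `s < 0`. -/
theorem morse_index_of_linear_homotopy
    {H : Type*} [NormedAddCommGroup H] [InnerProductSpace ℝ H] [FiniteDimensional ℝ H]
    (A B : H →L[ℝ] H) (hA : IsSelfAdjoint A) (hB : IsSelfAdjoint B)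
    (hAinv : Function.Bijective ⇑A)
    (s : ℝ) (hs : s ≠ 0)
    (hT : ∀ t ∈ Icc (0:ℝ) 1, Function.Bijective ⇑(t • B + (1 - t) • (s • A))) :
    morseIndex B = morseIndex (s • A) ∧
      (0 < s → morseIndex (s • A) = morseIndex A) ∧
      (s < 0 → morseIndex (s • A) = morseIndex (-A)) :=
  morse_index_of_linear_homotopy_general A B hA hB s hT
end
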